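/- Let 2 ≤ n ≤ m and let V be a dissipative quadratic stochastic operator on S^{m-1} with coefficients p_{ij,k} such that p_{k+1,k+1,k} = 1 for k = 1,…,n−1, p_{11,n} = 1, and for every k with n+1 ≤ k ≤ m there is no i with p_{ii,k} = 1. Define φ(x) = x₁ + ⋯ + x_n. Then for every x ∈ S^{m-1}, φ(Vx) ≥ φ(x) + ∑_{i=n+1}^m x_i²; in particular the sequence (φ(Vʲx))_{j ≥ 0} is nondecreasing along every trajectory. -/

import Mathlib

/-! Testing dissipativity on vertices forces each `p_{ii,·}` to be a point mass at some `σ(i)`,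
and `σ(i) ≤ n` since no `p_{ii,k}` with `k > n` equals `1`. Testing it on two-point states
`t e_i + (1 - t) e_j` forces `p_{ij,·}` to live on `{σ(i), σ(j)}` when `σ(i) ≠ σ(j)`, and to put
mass at least `1/2` on `σ(i)` otherwise. So `q_{ij} = ∑_{k ≤ n} p_{ij,k}` is `1` on the block
`i, j ≤ n` (where `σ` is the cyclic shift, hence injective), at least `1/2` in the mixed blocks
and at least `1` on the diagonal. On the simplex both `φ(x) + ∑_{i>n} x_i²` and `φ(Vx)` are
quadratic forms, and these bounds compare their symmetrized coefficients entrywise. -/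

open Finset Filter Topology

/-- `Majorizes y x` means `x ≺ y`: for every `k`, the sum of the `k` largest components of
`x` is at most the sum of the `k` largest components of `y`.  This is expressed via the
standard equivalent form: every subset-sum of `x` is dominated by some subset-sum of `y`
over a subset of the same cardinality (the maximum of the latter over subsets of
cardinality `k` being exactly the sum of the `k` largest components of `y`). -/
def Majorizes {m : ℕ} (y x : Fin m → ℝ) : Prop :=
  ∀ A : Finset (Fin m), ∃ B : Finset (Fin m),
    B.card = A.card ∧ ∑ i ∈ A, x i ≤ ∑ i ∈ B, y i

/-- The quadratic operator `(Vx)_k = ∑_{i,j} p_{ij,k} x_i x_j` with heredity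
coefficients `p`. -/
def QSO {m : ℕ} (p : Fin m → Fin m → Fin m → ℝ) (x : Fin m → ℝ) : Fin m → ℝ :=
  fun k => ∑ i, ∑ j, p i j k * x i * x j

/-- Conditions on heredity coefficients: symmetry, nonnegativity, stochasticity. -/
def IsQSOCoeff {m : ℕ} (p : Fin m → Fin m → Fin m → ℝ) : Prop :=
  (∀ i j k, p i j k = p j i k) ∧ (∀ i j k, 0 ≤ p i j k) ∧ (∀ i j, ∑ k, p i j k = 1)

/-- Dissipativity of the q.s.o.: `V x ≻ x` for every `x` in the simplex. -/
def IsDissipative {m : ℕ} (p : Fin m → Fin m → Fin m → ℝ) : Prop :=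
  ∀ x ∈ stdSimplex ℝ (Fin m), Majorizes (QSO p x) x

/-- The `k`-th vertex of the simplex (the `k`-th standard basis vector). -/
def vertex {m : ℕ} (k : Fin m) : Fin m → ℝ := fun j => if j = k then 1 else 0

/-- The ω-limit set of the trajectory of `x` under `V`: the set of all limit points of
the sequence `(Vⁿ x)ₙ`. -/
def omegaLimitSet {m : ℕ} (V : (Fin m → ℝ) → Fin m → ℝ) (x : Fin m → ℝ) :
    Set (Fin m → ℝ) :=
  {y | ∃ φ : ℕ → ℕ, StrictMono φ ∧ Tendsto (fun n => V^[φ n] x) atTop (𝓝 y)}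

section QuadraticForm

variable {ι : Type*} [Fintype ι]

lemma sum_sum_mul_le_of_add_le {c q : ι → ι → ℝ} {x : ι → ℝ} (hx : ∀ i, 0 ≤ x i)
    (h : ∀ i j, c i j + c j i ≤ q i j + q j i) :
    ∑ i, ∑ j, c i j * (x i * x j) ≤ ∑ i, ∑ j, q i j * (x i * x j) := by
  have symmetrize : ∀ d : ι → ι → ℝ,
      ∑ i, ∑ j, (d i j + d j i) * (x i * x j) = 2 * ∑ i, ∑ j, d i j * (x i * x j) := by
    intro d
    simp only [add_mul, sum_add_distrib]
    rw [sum_comm (f := fun i j => d j i * (x i * x j))]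
    simp only [mul_comm (x _) (x _)]
    ring
  have := sum_le_sum fun i (_ : i ∈ univ) => sum_le_sum fun j (_ : j ∈ univ) =>
    mul_le_mul_of_nonneg_right (h i j) (mul_nonneg (hx i) (hx j))
  rw [symmetrize, symmetrize] at this
  linarith

variable [DecidableEq ι]

/-- On the simplex, `∑_{i ∈ K} x_i + ∑_{i ∉ K} x_i²` is the quadratic form with coefficient `1`
on the rows of `K` and `1` on the diagonal outside `K`; the hypotheses dominate it entrywise
after symmetrization. -/
lemma sum_add_sum_sq_le_of_coeff {K : Finset ι} {q : ι → ι → ℝ} {x : ι → ℝ}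
    (hx : x ∈ stdSimplex ℝ ι) (hq : ∀ i j, 0 ≤ q i j)
    (hKK : ∀ i ∈ K, ∀ j ∈ K, 2 ≤ q i j + q j i)
    (hKKc : ∀ i ∈ K, ∀ j ∉ K, 1 ≤ q i j + q j i)
    (hKc : ∀ i ∉ K, 1 ≤ q i i) :
    ∑ i ∈ K, x i + ∑ i ∈ Kᶜ, x i ^ 2 ≤ ∑ i, ∑ j, q i j * (x i * x j) := by
  set c : ι → ι → ℝ := fun i j => if i ∈ K then 1 else if i = j then 1 else 0
  have hc : ∑ i ∈ K, x i + ∑ i ∈ Kᶜ, x i ^ 2 = ∑ i, ∑ j, c i j * (x i * x j) := by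
    rw [← sum_add_sum_compl K (fun i => ∑ j, c i j * (x i * x j))]
    congr 1
    · refine sum_congr rfl fun i hi => ?_
      simp [c, hi, ← mul_sum, hx.2]
    · refine sum_congr rfl fun i hi => ?_
      simp [c, mem_compl.1 hi, sq]
  rw [hc]
  refine sum_sum_mul_le_of_add_le hx.1 fun i j => ?_
  by_cases hi : i ∈ K <;> by_cases hj : j ∈ K
  · simp only [c, hi, hj, if_true]; linarith [hKK i hi j hj]
  · simp only [c, hi, hj, if_true, if_false, ne_of_mem_of_not_mem hi hj |>.symm]
    linarith [hKKc i hi j hj]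
  · simp only [c, hi, hj, if_true, if_false, ne_of_mem_of_not_mem hj hi |>.symm]
    linarith [hKKc j hj i hi]
  · by_cases hij : i = j
    · subst hij; simp only [c, hi, if_true, if_false]; linarith [hKc i hi]
    · simp only [c, hi, hj, hij, Ne.symm hij, if_false]; linarith [hq i j, hq j i]

end QuadraticForm

section QuadraticStochasticOperator

variable {m : ℕ} {p : Fin m → Fin m → Fin m → ℝ}

lemma sum_QSO_eq (K : Finset (Fin m)) (x : Fin m → ℝ) :
    ∑ k ∈ K, QSO p x k = ∑ i, ∑ j, (∑ k ∈ K, p i j k) * (x i * x j) := by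
  simp only [QSO, sum_mul]
  rw [sum_comm]
  refine sum_congr rfl fun i _ => ?_
  rw [sum_comm]
  exact sum_congr rfl fun j _ => sum_congr rfl fun k _ => by ring

lemma QSO_mem_stdSimplex (hp : IsQSOCoeff p) {x : Fin m → ℝ} (hx : x ∈ stdSimplex ℝ (Fin m)) :
    QSO p x ∈ stdSimplex ℝ (Fin m) := by
  refine ⟨fun k => sum_nonneg fun i _ => sum_nonneg fun j _ =>
    mul_nonneg (mul_nonneg (hp.2.1 i j k) (hx.1 i)) (hx.1 j), ?_⟩
  simp [sum_QSO_eq, hp.2.2, ← mul_sum, hx.2]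

lemma QSO_iterate_mem_stdSimplex (hp : IsQSOCoeff p) {x : Fin m → ℝ}
    (hx : x ∈ stdSimplex ℝ (Fin m)) (j : ℕ) : (QSO p)^[j] x ∈ stdSimplex ℝ (Fin m) := by
  induction j with
  | zero => exact hx
  | succ j ih => rw [Function.iterate_succ_apply']; exact QSO_mem_stdSimplex hp ih

lemma vertex_eq_single (i : Fin m) : vertex i = Pi.single i 1 := by
  ext j; simp [vertex, Pi.single_apply]

lemma smul_vertex_add_smul_vertex_mem_stdSimplex (i j : Fin m) {t : ℝ} (ht0 : 0 ≤ t)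
    (ht1 : t ≤ 1) : t • vertex i + (1 - t) • vertex j ∈ stdSimplex ℝ (Fin m) := by
  rw [vertex_eq_single, vertex_eq_single]
  exact convex_stdSimplex ℝ (Fin m) (single_mem_stdSimplex ℝ i) (single_mem_stdSimplex ℝ j)
    ht0 (by linarith) (by ring)

lemma QSO_smul_vertex_add_smul_vertex (i j : Fin m) (t s : ℝ) (k : Fin m) :
    QSO p (t • vertex i + s • vertex j) k
      = t ^ 2 * p i i k + t * s * (p i j k + p j i k) + s ^ 2 * p j j k := by
  simp [QSO, vertex, mul_add, add_mul, sum_add_distrib]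
  ring

end QuadraticStochasticOperator

section Dissipative

variable {m : ℕ} {p : Fin m → Fin m → Fin m → ℝ}

lemma eq_zero_of_one_le_sum_of_mem_stdSimplex {y : Fin m → ℝ} (hy : y ∈ stdSimplex ℝ (Fin m))
    {B : Finset (Fin m)} (hB : 1 ≤ ∑ k ∈ B, y k) {k : Fin m} (hk : k ∉ B) : y k = 0 := by
  have hsplit := sum_add_sum_compl B y
  rw [hy.2] at hsplit
  have hzero : ∑ a ∈ Bᶜ, y a = 0 :=
    le_antisymm (by linarith) (sum_nonneg fun a _ => hy.1 a)
  exact (sum_eq_zero_iff_of_nonneg fun a _ => hy.1 a).1 hzero k (mem_compl.2 hk)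

namespace IsQSOCoeff

variable (hp : IsQSOCoeff p)
include hp

lemma le_one (i j k : Fin m) : p i j k ≤ 1 :=
  hp.2.2 i j ▸ single_le_sum (fun k _ => hp.2.1 i j k) (mem_univ k)

lemma one_le_sum_of_eq_one {K : Finset (Fin m)} {i j a : Fin m} (ha : p i j a = 1)
    (haK : a ∈ K) : 1 ≤ ∑ k ∈ K, p i j k :=
  ha ▸ single_le_sum (fun k _ => hp.2.1 i j k) haK

lemma eq_zero_of_eq_one {i j a k : Fin m} (ha : p i j a = 1) (hk : k ≠ a) : p i j k = 0 := by
  have : p i j a + p i j k ≤ 1 := by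
    rw [← hp.2.2 i j, ← sum_pair hk.symm]
    exact sum_le_sum_of_subset_of_nonneg (subset_univ _) fun k _ _ => hp.2.1 i j k
  linarith [hp.2.1 i j k]

lemma eq_of_eq_one {i j a b : Fin m} (ha : p i j a = 1) (hb : p i j b = 1) : a = b := by
  by_contra hab
  simp [hp.eq_zero_of_eq_one ha (Ne.symm hab)] at hb

end IsQSOCoeff

namespace IsDissipative

variable (hd : IsDissipative p)
include hd

lemma exists_le_QSO {x : Fin m → ℝ} (hx : x ∈ stdSimplex ℝ (Fin m)) (i : Fin m) :
    ∃ k, x i ≤ QSO p x k := by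
  obtain ⟨B, hBcard, hB⟩ := hd x hx {i}
  obtain ⟨k, rfl⟩ := card_eq_one.1 (by rw [hBcard, card_singleton])
  exact ⟨k, by simpa using hB⟩

variable (hp : IsQSOCoeff p)
include hp

lemma exists_diag_eq_one (i : Fin m) : ∃ a, p i i a = 1 := by
  obtain ⟨a, ha⟩ := hd.exists_le_QSO (x := 1 • vertex i + (1 - 1) • vertex i)
    (smul_vertex_add_smul_vertex_mem_stdSimplex i i zero_le_one le_rfl) i
  rw [QSO_smul_vertex_add_smul_vertex] at ha
  refine ⟨a, le_antisymm (hp.le_one i i a) ?_⟩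
  simpa [vertex] using ha

/-- The two-point state `(e_i + e_j)/2` carries mass `1` on `{i, j}`, so by dissipativity its
image lives on two points; these must be `a` and `b`, where it has mass at least `1/4`. -/
lemma eq_zero_of_diag_eq_one_of_ne {i j a b k : Fin m} (ha : p i i a = 1) (hb : p j j b = 1)
    (hab : a ≠ b) (hka : k ≠ a) (hkb : k ≠ b) : p i j k = 0 := by
  set x : Fin m → ℝ := (1 / 2 : ℝ) • vertex i + (1 - 1 / 2 : ℝ) • vertex j with hx_def
  have hx : x ∈ stdSimplex ℝ (Fin m) :=
    smul_vertex_add_smul_vertex_mem_stdSimplex i j (by norm_num) (by norm_num)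
  have hVx := QSO_mem_stdSimplex hp hx
  have hVx_apply : ∀ k, QSO p x k = (1 / 2) ^ 2 * p i i k
      + 1 / 2 * (1 - 1 / 2) * (p i j k + p j i k) + (1 - 1 / 2) ^ 2 * p j j k :=
    QSO_smul_vertex_add_smul_vertex i j _ _
  obtain ⟨B, hBcard, hB⟩ := hd x hx {i, j}
  have hxij : ∑ l ∈ {i, j}, x l = 1 := by
    rcases eq_or_ne i j with rfl | hij
    · norm_num [hx_def, vertex]
    · rw [sum_pair hij]; norm_num [hx_def, vertex, hij, Ne.symm hij]
  rw [hxij] at hB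
  have mem_B : ∀ c, 0 < QSO p x c → c ∈ B := fun c hc => by
    by_contra hcB
    exact hc.ne' (eq_zero_of_one_le_sum_of_mem_stdSimplex hVx hB hcB)
  have haB : a ∈ B := mem_B a (by
    rw [hVx_apply, ha]; nlinarith [hp.2.1 i j a, hp.2.1 j i a, hp.2.1 j j a])
  have hbB : b ∈ B := mem_B b (by
    rw [hVx_apply, hb]; nlinarith [hp.2.1 i j b, hp.2.1 j i b, hp.2.1 i i b])
  have hB_eq : {a, b} = B := eq_of_subset_of_card_le (by simp [insert_subset_iff, haB, hbB])
    (by rw [hBcard, card_pair hab]; exact card_le_two)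
  have hk : QSO p x k = 0 :=
    eq_zero_of_one_le_sum_of_mem_stdSimplex hVx hB (by simp [← hB_eq, hka, hkb])
  rw [hVx_apply, hp.eq_zero_of_eq_one ha hka, hp.eq_zero_of_eq_one hb hkb] at hk
  nlinarith [hp.2.1 i j k, hp.2.1 j i k]

/-- If `p_{ij,a} < 1/2`, then for `1/2 < t < 1` with `2 t (1 - p_{ij,a}) > 1` no coordinate of the
image of `t e_i + (1 - t) e_j` reaches `t`, contradicting dissipativity. -/
lemma half_le_of_diag_eq_one {i j a : Fin m} (ha : p i i a = 1) (hb : p j j a = 1) :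
    1 / 2 ≤ p i j a := by
  rcases eq_or_ne i j with rfl | hij
  · linarith
  by_contra! hlt
  have hq := hp.2.1 i j a
  obtain ⟨t, ht_half, ht_one, htq⟩ : ∃ t : ℝ, 1 / 2 < t ∧ t < 1 ∧ 1 < 2 * t * (1 - p i j a) :=
    ⟨3 / 4 + p i j a / 2, by linarith, by linarith, by nlinarith⟩
  obtain ⟨k, hk⟩ := hd.exists_le_QSO
    (smul_vertex_add_smul_vertex_mem_stdSimplex i j (by linarith) ht_one.le) i
  rw [QSO_smul_vertex_add_smul_vertex, hp.1 j i] at hk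
  simp only [vertex, Pi.add_apply, Pi.smul_apply, if_true, if_neg hij, smul_eq_mul] at hk
  by_cases hka : k = a
  · subst hka
    rw [ha, hb] at hk
    nlinarith [mul_pos (sub_pos.2 ht_one) (sub_pos.2 htq)]
  · rw [hp.eq_zero_of_eq_one ha hka, hp.eq_zero_of_eq_one hb hka] at hk
    nlinarith [hp.le_one i j k, hp.2.1 i j k, mul_pos (sub_pos.2 ht_one) (by linarith : 0 < t)]

variable {K : Finset (Fin m)} {i j a b : Fin m}

lemma sum_eq_one_of_diag_eq_one_of_ne (ha : p i i a = 1) (hb : p j j b = 1) (hab : a ≠ b)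
    (haK : a ∈ K) (hbK : b ∈ K) : ∑ k ∈ K, p i j k = 1 := by
  rw [← hp.2.2 i j]
  exact sum_subset (subset_univ K) fun k _ hk => hd.eq_zero_of_diag_eq_one_of_ne hp ha hb hab
    (fun h => hk (h ▸ haK)) (fun h => hk (h ▸ hbK))

lemma half_le_sum_of_diag_eq_one (ha : p i i a = 1) (hb : p j j b = 1) (haK : a ∈ K)
    (hbK : b ∈ K) : 1 / 2 ≤ ∑ k ∈ K, p i j k := by
  rcases eq_or_ne a b with rfl | hab
  · exact (hd.half_le_of_diag_eq_one hp ha hb).trans (single_le_sum (fun k _ => hp.2.1 i j k) haK)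
  · rw [hd.sum_eq_one_of_diag_eq_one_of_ne hp ha hb hab haK hbK]; norm_num

lemma one_le_sum_of_diag_injective (hK : ∀ i a, p i i a = 1 → a ∈ K)
    (hinj : ∀ i ∈ K, ∀ j ∈ K, ∀ a, p i i a = 1 → p j j a = 1 → i = j) (hi : i ∈ K)
    (hj : j ∈ K) : 1 ≤ ∑ k ∈ K, p i j k := by
  obtain ⟨a, ha⟩ := hd.exists_diag_eq_one hp i
  obtain ⟨b, hb⟩ := hd.exists_diag_eq_one hp j
  rcases eq_or_ne a b with rfl | hab
  · obtain rfl := hinj i hi j hj a ha hb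
    exact hp.one_le_sum_of_eq_one ha (hK i a ha)
  · exact (hd.sum_eq_one_of_diag_eq_one_of_ne hp ha hb hab (hK i a ha) (hK j b hb)).ge

theorem sum_add_sum_sq_le_sum_QSO (hK : ∀ i a, p i i a = 1 → a ∈ K)
    (hinj : ∀ i ∈ K, ∀ j ∈ K, ∀ a, p i i a = 1 → p j j a = 1 → i = j) {x : Fin m → ℝ}
    (hx : x ∈ stdSimplex ℝ (Fin m)) :
    ∑ i ∈ K, x i + ∑ i ∈ Kᶜ, x i ^ 2 ≤ ∑ i ∈ K, QSO p x i := by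
  rw [sum_QSO_eq]
  refine sum_add_sum_sq_le_of_coeff hx (fun i j => sum_nonneg fun k _ => hp.2.1 i j k)
    (fun i hi j hj => ?_) (fun i _ j _ => ?_) (fun i _ => ?_)
  · linarith [hd.one_le_sum_of_diag_injective hp hK hinj hi hj,
      hd.one_le_sum_of_diag_injective hp hK hinj hj hi]
  · obtain ⟨a, ha⟩ := hd.exists_diag_eq_one hp i
    obtain ⟨b, hb⟩ := hd.exists_diag_eq_one hp j
    linarith [hd.half_le_sum_of_diag_eq_one hp ha hb (hK i a ha) (hK j b hb),
      hd.half_le_sum_of_diag_eq_one hp hb ha (hK j b hb) (hK i a ha)]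
  · obtain ⟨a, ha⟩ := hd.exists_diag_eq_one hp i
    exact hp.one_le_sum_of_eq_one ha (hK i a ha)

end IsDissipative

end Dissipative

/-- under the hypotheses of the single-cycle case, the Lyapunov function
`φ(x) = x₁ + ⋯ + x_n` satisfies `φ(Vx) ≥ φ(x) + ∑_{i>n} x_i²`; in particular
`φ` is nondecreasing along every trajectory. -/
theorem stmt15 {m n : ℕ} (hn : 2 ≤ n) (hnm : n ≤ m)
    (p : Fin m → Fin m → Fin m → ℝ)
    (hp : IsQSOCoeff p) (hd : IsDissipative p)
    (h1 : ∀ k : ℕ, ∀ hk : k + 1 < n,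
      p ⟨k + 1, by omega⟩ ⟨k + 1, by omega⟩ ⟨k, by omega⟩ = 1)
    (h2 : p ⟨0, by omega⟩ ⟨0, by omega⟩ ⟨n - 1, by omega⟩ = 1)
    (h3 : ∀ k : ℕ, n ≤ k → ∀ hk : k < m, ∀ i : Fin m, p i i ⟨k, hk⟩ ≠ 1) :
    (∀ x ∈ stdSimplex ℝ (Fin m),
      (∑ i ∈ Finset.univ.filter fun i : Fin m => (i : ℕ) < n, x i) +
          ∑ i ∈ Finset.univ.filter fun i : Fin m => n ≤ (i : ℕ), (x i) ^ 2 ≤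
        ∑ i ∈ Finset.univ.filter fun i : Fin m => (i : ℕ) < n, QSO p x i) ∧
    ∀ x ∈ stdSimplex ℝ (Fin m), ∀ j : ℕ,
      (∑ i ∈ Finset.univ.filter fun i : Fin m => (i : ℕ) < n, ((QSO p)^[j] x) i) ≤
        ∑ i ∈ Finset.univ.filter fun i : Fin m => (i : ℕ) < n,
          ((QSO p)^[j + 1] x) i := by
  set K := univ.filter fun i : Fin m => (i : ℕ) < n
  have hK : ∀ i a, p i i a = 1 → a ∈ K := fun i a ha => by
    by_contra haK
    exact h3 a (by simpa [K] using haK) a.isLt i ha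
  have hcycle : ∀ i : Fin m, (i : ℕ) < n → ∃ a : Fin m, ((a : ℕ) + 1) % n = i ∧ p i i a = 1 := by
    rintro ⟨_ | k, hk⟩ hi
    · exact ⟨⟨n - 1, by omega⟩, by simp [Nat.sub_add_cancel (by omega : 1 ≤ n)], h2⟩
    · exact ⟨⟨k, by omega⟩, Nat.mod_eq_of_lt hi, h1 k hi⟩
  have hinj : ∀ i ∈ K, ∀ j ∈ K, ∀ a, p i i a = 1 → p j j a = 1 → i = j := by
    intro i hi j hj a hia hja
    obtain ⟨b, hbi, hib⟩ := hcycle i (by simpa [K] using hi)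
    obtain ⟨c, hcj, hjc⟩ := hcycle j (by simpa [K] using hj)
    obtain rfl := hp.eq_of_eq_one hib hia
    obtain rfl := hp.eq_of_eq_one hjc hja
    exact Fin.ext (hbi.symm.trans hcj)
  have hKc : univ.filter (fun i : Fin m => n ≤ (i : ℕ)) = Kᶜ := by ext; simp [K]
  have step : ∀ x ∈ stdSimplex ℝ (Fin m),
      (∑ i ∈ K, x i) + ∑ i ∈ univ.filter fun i : Fin m => n ≤ (i : ℕ), x i ^ 2 ≤
        ∑ i ∈ K, QSO p x i :=
    fun x hx => hKc ▸ hd.sum_add_sum_sq_le_sum_QSO hp hK hinj hx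
  refine ⟨step, fun x hx j => ?_⟩
  rw [Function.iterate_succ_apply']
  linarith [step _ (QSO_iterate_mem_stdSimplex hp hx j),
    sum_nonneg fun i (_ : i ∈ univ.filter fun i : Fin m => n ≤ (i : ℕ)) =>
      sq_nonneg ((QSO p)^[j] x i)]
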